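/- Let V be a finite-dimensional real inner product space, let A be a linear endomorphism of V with trace zero, and let c be a real number. Write S(A) = (1/2)(A + A*) for the symmetric part of A, where A* denotes the adjoint of A with respect to the inner product, and equip the endomorphisms of V with the trace inner product ⟨X, Y⟩ = tr(X ∘ Y*). If ⟨A, c·id_V − S(A)⟩ = 0, then S(A) = 0; that is, A is skew-adjoint (A* = −A). -/

import Mathlib

/-- The symmetric part `S(A) = (1/2)(A + A*)` of an endomorphism of a
finite-dimensional real inner product space. -/
noncomputable def symPart {V : Type*} [NormedAddCommGroup V] [InnerProductSpace ℝ V]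
    [FiniteDimensional ℝ V] (A : V →ₗ[ℝ] V) : V →ₗ[ℝ] V :=
  (1 / 2 : ℝ) • (A + LinearMap.adjoint A)

/-- The trace inner product `⟨X, Y⟩ = tr (X ∘ Y*)` on endomorphisms of a
finite-dimensional real inner product space. -/
noncomputable def traceInner {V : Type*} [NormedAddCommGroup V] [InnerProductSpace ℝ V]
    [FiniteDimensional ℝ V] (X Y : V →ₗ[ℝ] V) : ℝ :=
  LinearMap.trace ℝ V (X ∘ₗ LinearMap.adjoint Y)

lemma trace_adjoint_eq {V : Type*} [NormedAddCommGroup V] [InnerProductSpace ℝ V]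
    [FiniteDimensional ℝ V] (X : V →ₗ[ℝ] V) :
    LinearMap.trace ℝ V (LinearMap.adjoint X) = LinearMap.trace ℝ V X := by
  let b := stdOrthonormalBasis ℝ V
  rw [LinearMap.trace_eq_matrix_trace ℝ b.toBasis, LinearMap.trace_eq_matrix_trace ℝ b.toBasis,
    LinearMap.toMatrix_adjoint b b]
  simp [Matrix.trace, Matrix.conjTranspose_apply]

lemma eq_zero_of_trace_comp_adjoint {V : Type*} [NormedAddCommGroup V] [InnerProductSpace ℝ V]
    [FiniteDimensional ℝ V] (X : V →ₗ[ℝ] V)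
    (h : LinearMap.trace ℝ V (X ∘ₗ LinearMap.adjoint X) = 0) : X = 0 := by
  let b := stdOrthonormalBasis ℝ V
  set M := LinearMap.toMatrix b.toBasis b.toBasis X with hM
  rw [LinearMap.trace_eq_matrix_trace ℝ b.toBasis, LinearMap.toMatrix_comp _ b.toBasis,
    LinearMap.toMatrix_adjoint b b] at h
  have hsum : ∑ i, ∑ j, (M i j) ^ 2 = 0 := by
    rw [← h]
    simp [Matrix.trace, Matrix.mul_apply, Matrix.conjTranspose_apply, Matrix.diag, sq, hM]
  have hMz : M = 0 := by
    ext i j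
    have h1 : ∀ i ∈ Finset.univ, (0:ℝ) ≤ ∑ j, (M i j) ^ 2 :=
      fun i _ => Finset.sum_nonneg fun j _ => sq_nonneg _
    have h2 := (Finset.sum_eq_zero_iff_of_nonneg h1).mp hsum i (Finset.mem_univ i)
    have h3 := (Finset.sum_eq_zero_iff_of_nonneg
      (fun j _ => sq_nonneg (M i j))).mp h2 j (Finset.mem_univ j)
    simpa using pow_eq_zero_iff (n := 2) (by norm_num) |>.mp h3
  apply (LinearMap.toMatrix b.toBasis b.toBasis).injective
  rw [map_zero]
  exact hM ▸ hMz

/-- If `A` is a traceless endomorphism of a finite-dimensional real inner product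
space and `⟨A, c • id - S(A)⟩ = 0` in the trace inner product, then `S(A) = 0`,
i.e. `A` is skew-adjoint. -/
theorem symPart_eq_zero_of_traceless_of_traceInner_eq_zero
    {V : Type*} [NormedAddCommGroup V] [InnerProductSpace ℝ V] [FiniteDimensional ℝ V]
    (A : V →ₗ[ℝ] V) (c : ℝ)
    (htr : LinearMap.trace ℝ V A = 0)
    (h : traceInner A (c • (LinearMap.id : V →ₗ[ℝ] V) - symPart A) = 0) :
    symPart A = 0 ∧ LinearMap.adjoint A = -A := by
  have hSadj : LinearMap.adjoint (symPart A) = symPart A := by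
    simp [symPart, map_smul, map_add, LinearMap.adjoint_adjoint, add_comm]
  -- from h: trace (A ∘ S) = 0
  have hAS : LinearMap.trace ℝ V (A ∘ₗ symPart A) = 0 := by
    have := h
    rw [traceInner, map_sub, hSadj] at this
    have hid : LinearMap.adjoint (c • (LinearMap.id : V →ₗ[ℝ] V)) =
        c • (LinearMap.id : V →ₗ[ℝ] V) := by
      simp [map_smul, ← LinearMap.star_eq_adjoint, ← Module.End.one_eq_id]
    rw [hid] at this
    simp only [LinearMap.comp_sub, map_sub, LinearMap.comp_smul, map_smul,
      LinearMap.comp_id, htr, smul_zero, zero_sub, neg_eq_zero] at this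
    exact this
  have hAstarS : LinearMap.trace ℝ V (LinearMap.adjoint A ∘ₗ symPart A) = 0 := by
    have : LinearMap.adjoint (symPart A ∘ₗ A) = LinearMap.adjoint A ∘ₗ symPart A := by
      rw [LinearMap.adjoint_comp, hSadj]
    rw [← this, trace_adjoint_eq, LinearMap.trace_comp_comm', hAS]
  have hSS : LinearMap.trace ℝ V (symPart A ∘ₗ LinearMap.adjoint (symPart A)) = 0 := by
    rw [hSadj]
    have : (symPart A ∘ₗ symPart A : V →ₗ[ℝ] V)
        = (1/2 : ℝ) • (A ∘ₗ symPart A) + (1/2 : ℝ) • (LinearMap.adjoint A ∘ₗ symPart A) := by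
      rw [symPart]
      ext v
      simp [LinearMap.add_comp, LinearMap.smul_comp, smul_add]
    rw [this]
    simp [hAS, hAstarS]
  have hS : symPart A = 0 := eq_zero_of_trace_comp_adjoint _ hSS
  refine ⟨hS, ?_⟩
  have : (1 / 2 : ℝ) • (A + LinearMap.adjoint A) = 0 := hS
  have h2 : A + LinearMap.adjoint A = 0 := by
    have := congrArg (fun X => (2 : ℝ) • X) this
    simpa [smul_smul] using this
  linear_combination (norm := module) h2
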